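/- Combining the above (Proposition 3 of the paper): if θ is invertible, Y = θX = (θ+Δθ)(X+ΔX) with ΔθΔX = 0, and X has full row rank, then ‖Δθ‖/‖θ‖ ≤ ‖ΔX‖ · Σᵢ₌₁^r (1/σᵢ) ‖vᵢuᵢᵀ‖, where σᵢ, uᵢ, vᵢ come from the SVD of X. -/

import Mathlib

open Matrix
open scoped Matrix.Norms.L2Operator

/-!
Subtracting `θX` from `(θ + Δθ)(X + ΔX)` and using `ΔθΔX = 0` leaves `Δθ X = -θ ΔX`. Since `X` has
the right inverse `X† = Σ σᵢ⁻¹ vᵢ uᵢᵀ`, this gives `Δθ = -θ ΔX X†`, so submultiplicativity of the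
operator norm and the triangle inequality for the sum defining `X†` bound `‖Δθ‖ / ‖θ‖`.
-/

namespace Matrix

variable {ι l m : Type*} [Fintype ι]

noncomputable def svdPinv {K : Type*} [Field K] (σ : ι → K) (u : ι → l → K) (v : ι → m → K) :
    Matrix m l K :=
  ∑ i, (σ i)⁻¹ • vecMulVec (v i) (u i)

theorem sum_vecMulVec_self_eq_one [DecidableEq ι] {R : Type*} [CommRing R] {u : ι → ι → R}
    (hu : ∀ i j, u i ⬝ᵥ u j = if i = j then 1 else 0) :
    ∑ i, vecMulVec (u i) (u i) = 1 := by
  have hrows : of u * (of u)ᵀ = 1 := by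
    ext i j
    simpa [mul_apply, one_apply, dotProduct] using hu i j
  rw [← mul_eq_one_comm.mp hrows]
  ext a b
  simp [mul_apply, sum_apply, vecMulVec_apply]

theorem sum_smul_vecMulVec_mul_svdPinv [DecidableEq ι] {K : Type*} [Field K] [Fintype m]
    {σ : ι → K} (hσ : ∀ i, σ i ≠ 0) (u : ι → l → K) {v : ι → m → K}
    (hv : ∀ i j, v i ⬝ᵥ v j = if i = j then 1 else 0) :
    (∑ i, σ i • vecMulVec (u i) (v i)) * svdPinv σ u v = ∑ i, vecMulVec (u i) (u i) := by
  simp_rw [svdPinv, Matrix.sum_mul, Matrix.mul_sum, Matrix.smul_mul, Matrix.mul_smul,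
    vecMulVec_mul_vecMulVec, hv, ite_smul, one_smul, zero_smul, apply_ite (vecMulVec _),
    vecMulVec_zero, smul_ite, smul_zero, Finset.sum_ite_eq, Finset.mem_univ, if_true, smul_smul,
    mul_inv_cancel₀ (hσ _), one_smul]

theorem sum_smul_vecMulVec_mul_svdPinv_eq_one [DecidableEq ι] {K : Type*} [Field K] [Fintype m]
    {σ : ι → K} (hσ : ∀ i, σ i ≠ 0) {u : ι → ι → K} {v : ι → m → K}
    (hu : ∀ i j, u i ⬝ᵥ u j = if i = j then 1 else 0)
    (hv : ∀ i j, v i ⬝ᵥ v j = if i = j then 1 else 0) :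
    (∑ i, σ i • vecMulVec (u i) (v i)) * svdPinv σ u v = 1 := by
  rw [sum_smul_vecMulVec_mul_svdPinv hσ u hv, sum_vecMulVec_self_eq_one hu]

theorem norm_svdPinv_le {𝕜 : Type*} [RCLike 𝕜] [Fintype l] [DecidableEq l] [Fintype m]
    (σ : ι → 𝕜) (u : ι → l → 𝕜) (v : ι → m → 𝕜) :
    ‖svdPinv σ u v‖ ≤ ∑ i, ‖σ i‖⁻¹ * ‖vecMulVec (v i) (u i)‖ :=
  (norm_sum_le _ _).trans_eq <| by simp_rw [norm_smul, norm_inv]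

theorem eq_neg_mul_mul_of_mul_eq_add_mul_add {R k : Type*} [Ring R] [Fintype l] [Fintype m]
    [DecidableEq l] {θ Δθ : Matrix k l R} {X ΔX : Matrix l m R} {P : Matrix m l R}
    (hY : θ * X = (θ + Δθ) * (X + ΔX)) (h2 : Δθ * ΔX = 0) (hXP : X * P = 1) :
    Δθ = -(θ * ΔX * P) := by
  have hlin : Δθ * X = -(θ * ΔX) := by
    rw [Matrix.add_mul, Matrix.mul_add, Matrix.mul_add, h2, add_zero] at hY
    exact eq_neg_of_add_eq_zero_right (by simpa [add_assoc] using hY.symm)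
  calc Δθ = Δθ * X * P := by rw [Matrix.mul_assoc, hXP, Matrix.mul_one]
    _ = -(θ * ΔX * P) := by rw [hlin, Matrix.neg_mul]

end Matrix

theorem stmt10_general {n m : ℕ} (θ Δθ : Matrix (Fin n) (Fin n) ℝ)
    (X ΔX Y : Matrix (Fin n) (Fin m) ℝ)
    (hY : Y = θ * X) (hY' : Y = (θ + Δθ) * (X + ΔX)) (h2 : Δθ * ΔX = 0)
    (σ : Fin n → ℝ) (hσ : ∀ i, 0 < σ i)
    (u : Fin n → (Fin n → ℝ)) (v : Fin n → (Fin m → ℝ))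
    (hu : ∀ i j, u i ⬝ᵥ u j = if i = j then 1 else 0)
    (hv : ∀ i j, v i ⬝ᵥ v j = if i = j then 1 else 0)
    (hX : X = ∑ i, σ i • vecMulVec (u i) (v i)) :
    ‖Δθ‖ / ‖θ‖ ≤ ‖ΔX‖ * ∑ i, (σ i)⁻¹ * ‖vecMulVec (v i) (u i)‖ := by
  set P := svdPinv σ u v
  have hXP : X * P = 1 := hX ▸ sum_smul_vecMulVec_mul_svdPinv_eq_one (fun i => (hσ i).ne') hu hv
  have hΔθ := eq_neg_mul_mul_of_mul_eq_add_mul_add (hY.symm.trans hY') h2 hXP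
  have hP : ‖P‖ ≤ ∑ i, (σ i)⁻¹ * ‖vecMulVec (v i) (u i)‖ := by
    simpa only [Real.norm_of_nonneg (hσ _).le] using norm_svdPinv_le σ u v
  refine div_le_of_le_mul₀ (norm_nonneg _)
    (mul_nonneg (norm_nonneg _) ((norm_nonneg _).trans hP)) ?_
  calc ‖Δθ‖ = ‖θ * ΔX * P‖ := by rw [hΔθ, norm_neg]
    _ ≤ ‖θ‖ * ‖ΔX‖ * ‖P‖ := (l2_opNorm_mul _ _).trans <| by gcongr; exact l2_opNorm_mul _ _
    _ = ‖ΔX‖ * ‖P‖ * ‖θ‖ := by ring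
    _ ≤ ‖ΔX‖ * (∑ i, (σ i)⁻¹ * ‖vecMulVec (v i) (u i)‖) * ‖θ‖ := by gcongr

/-- Proposition 3 of the paper: if `θ` is invertible, `Y = θX = (θ+Δθ)(X+ΔX)` with
`ΔθΔX = 0`, and `X` has full row rank `n` with SVD `X = Σᵢ σᵢ uᵢ vᵢᵀ`, then
`‖Δθ‖/‖θ‖ ≤ ‖ΔX‖ · Σᵢ σᵢ⁻¹ ‖vᵢ uᵢᵀ‖`. -/
theorem stmt10 {n m : ℕ} (θ Δθ : Matrix (Fin n) (Fin n) ℝ)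
    (X ΔX Y : Matrix (Fin n) (Fin m) ℝ) (hθ : Invertible θ)
    (hY : Y = θ * X) (hY' : Y = (θ + Δθ) * (X + ΔX)) (h2 : Δθ * ΔX = 0)
    (hrank : X.rank = n)
    (σ : Fin n → ℝ) (hσ : ∀ i, 0 < σ i)
    (u : Fin n → (Fin n → ℝ)) (v : Fin n → (Fin m → ℝ))
    (hu : ∀ i j, u i ⬝ᵥ u j = if i = j then 1 else 0)
    (hv : ∀ i j, v i ⬝ᵥ v j = if i = j then 1 else 0)
    (hX : X = ∑ i, σ i • vecMulVec (u i) (v i)) :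
    ‖Δθ‖ / ‖θ‖ ≤ ‖ΔX‖ * ∑ i, (σ i)⁻¹ * ‖vecMulVec (v i) (u i)‖ :=
  stmt10_general θ Δθ X ΔX Y hY hY' h2 σ hσ u v hu hv hX
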